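/- arXiv:2605.17670 — 2 statements merged into one kernel-verified Lean document; each statement's English description precedes it below -/
import Mathlib

section
/- Let R be an integral domain over a field k of characteristic zero, δ a locally nilpotent derivation of R, and f ∈ R such that f divides δ(f). Then δ(f) = 0. -/
/-!
Call the least `n` with `δ^[n+1] g = 0` the `δ`-degree of `g ≠ 0`. By the Leibniz rule, the
only surviving term of `δ^[p+q] (a * b)` for `a, b` of degrees `p, q` is
`(p+q).choose p • (δ^[p] a * δ^[q] b)`, which is nonzero in a domain of characteristic zero, so
degrees add. If `δ f = f * a` with `δ f ≠ 0`, the degree of `δ f` would be at least that of `f`,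
whereas `δ` lowers degrees.
-/

/-- A locally nilpotent derivation: every element is annihilated by some iterate. -/
def IsLND {k R : Type*} [CommRing k] [CommRing R] [Algebra k R]
    (δ : Derivation k R R) : Prop :=
  ∀ g : R, ∃ n : ℕ, ((δ.toLinearMap : Module.End k R) ^ n) g = 0

open Finset

namespace Derivation

variable {k R : Type*} [CommRing k] [CommRing R] [Algebra k R] (δ : Derivation k R R)

theorem iterate_apply_mul (n : ℕ) (a b : R) :
    δ^[n] (a * b) = ∑ ij ∈ antidiagonal n, n.choose ij.1 • (δ^[ij.1] a * δ^[ij.2] b) := by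
  induction n with
  | zero => simp
  | succ n ih =>
    rw [sum_antidiagonal_choose_succ_nsmul (M := R) (fun i j ↦ δ^[i] a * δ^[j] b) n]
    simp only [Function.iterate_succ_apply', ih, map_sum, map_nsmul, leibniz, smul_eq_mul,
      smul_add, sum_add_distrib]
    congr 1
    refine sum_congr rfl fun ⟨i, j⟩ hij ↦ ?_
    rw [n.choose_symm_of_eq_add (mem_antidiagonal.1 hij).symm]
    ring

variable {δ}

theorem iterate_eq_zero_of_le {g : R} {n m : ℕ} (hn : δ^[n] g = 0) (hnm : n ≤ m) :
    δ^[m] g = 0 := by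
  obtain ⟨c, rfl⟩ := Nat.exists_eq_add_of_le hnm
  rw [add_comm, Function.iterate_add_apply, hn]
  exact Function.iterate_fixed δ.map_zero c

theorem iterate_add_apply_mul_of_iterate_succ_eq_zero {a b : R} {p q : ℕ}
    (ha : δ^[p + 1] a = 0) (hb : δ^[q + 1] b = 0) :
    δ^[p + q] (a * b) = (p + q).choose p • (δ^[p] a * δ^[q] b) := by
  rw [iterate_apply_mul, sum_eq_single_of_mem (p, q) (mem_antidiagonal.2 rfl)]
  rintro ⟨i, j⟩ hij hne
  replace hij : i + j = p + q := mem_antidiagonal.1 hij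
  rcases lt_or_gt_of_ne (fun hip : i = p ↦ hne (Prod.ext hip (by omega))) with hi | hi
  · rw [iterate_eq_zero_of_le hb (by omega : q + 1 ≤ j), mul_zero, smul_zero]
  · rw [iterate_eq_zero_of_le ha (by omega : p + 1 ≤ i), zero_mul, smul_zero]

theorem iterate_add_apply_mul_ne_zero [IsDomain R] [CharZero R] {a b : R} {p q : ℕ}
    (ha : δ^[p] a ≠ 0) (ha' : δ^[p + 1] a = 0) (hb : δ^[q] b ≠ 0) (hb' : δ^[q + 1] b = 0) :
    δ^[p + q] (a * b) ≠ 0 := by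
  rw [iterate_add_apply_mul_of_iterate_succ_eq_zero ha' hb', nsmul_eq_mul]
  exact mul_ne_zero (Nat.cast_ne_zero.2 (Nat.choose_pos (Nat.le_add_right p q)).ne')
    (mul_ne_zero ha hb)

end Derivation

theorem IsLND.exists_iterate_ne_zero_and_iterate_succ_eq_zero {k R : Type*} [CommRing k]
    [CommRing R] [Algebra k R] {δ : Derivation k R R} (hδ : IsLND δ) {g : R} (hg : g ≠ 0) :
    ∃ n, δ^[n] g ≠ 0 ∧ δ^[n + 1] g = 0 := by
  refine Nat.exists_not_and_succ_of_not_zero_of_exists hg ?_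
  obtain ⟨n, hn⟩ := hδ g
  exact ⟨n, by rwa [Module.End.pow_apply] at hn⟩

/-- If `δ` is a locally nilpotent derivation of a domain over a field of characteristic
zero and `f ∣ δ f`, then `δ f = 0`. -/
theorem stmt2 {k R : Type*} [Field k] [CharZero k] [CommRing R] [IsDomain R] [Algebra k R]
    (δ : Derivation k R R) (hδ : IsLND δ)
    (f : R) (h : f ∣ δ f) :
    δ f = 0 := by
  by_contra hne
  obtain ⟨a, ha⟩ := h
  have hf : f ≠ 0 := by rintro rfl; exact hne δ.map_zero
  have ha0 : a ≠ 0 := by rintro rfl; exact hne (by rw [ha, mul_zero])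
  have : CharZero R := charZero_of_injective_algebraMap (algebraMap k R).injective
  obtain ⟨p, hp, hp'⟩ := hδ.exists_iterate_ne_zero_and_iterate_succ_eq_zero hf
  obtain ⟨q, hq, hq'⟩ := hδ.exists_iterate_ne_zero_and_iterate_succ_eq_zero ha0
  apply Derivation.iterate_add_apply_mul_ne_zero hp hp' hq hq'
  rw [← ha, ← Function.iterate_succ_apply]
  exact Derivation.iterate_eq_zero_of_le hp' (by omega)
end

section
/- Let k be an algebraically closed field of characteristic zero and R = k[x,y,z]/(x² + y² + z^γ) with γ ≥ 3 odd. Then there is no nonzero derivation δ of R that is homogeneous of some degree with respect to the grading deg x = deg y = γ, deg z = 2, locally nilpotent, and satisfies δ(z) = 0. -/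
/-!
Choosing `i` with `i² = -1`, the relation reads `(x + iy)(x - iy) = -z^γ`. The kernel of a
locally nilpotent derivation of a domain of characteristic zero is factorially closed: if
`δ^[p] a` and `δ^[q] b` are the last nonzero iterates, the Leibniz rule shows that
`δ^[p+q] (ab)` is a nonzero multiple of their product. So a derivation killing `z` kills
`x ± iy`, hence `x` and `y`, hence the whole ring. The ring is a domain because, as a
polynomial in `z`, `z^γ + (x + iy)(x - iy)` is Eisenstein at the prime `x + iy`.
-/

set_option synthInstance.maxHeartbeats 400000

open MvPolynomial

namespace Derivation

open Finset

variable {k A : Type*} [CommRing k] [CommRing A] [Algebra k A] (δ : Derivation k A A)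

theorem iterate_map_mul (n : ℕ) (a b : A) :
    δ^[n] (a * b) = ∑ ij ∈ antidiagonal n, n.choose ij.1 • (δ^[ij.1] a * δ^[ij.2] b) := by
  induction n with
  | zero => simp
  | succ n ih =>
    rw [sum_antidiagonal_choose_succ_nsmul (fun i j => δ^[i] a * δ^[j] b) n]
    simp only [Function.iterate_succ_apply', ih, map_sum, map_nsmul, leibniz, smul_eq_mul,
      smul_add, sum_add_distrib]
    congr 1
    refine sum_congr rfl fun ⟨i, j⟩ hij ↦ ?_
    rw [n.choose_symm_of_eq_add (mem_antidiagonal.1 hij).symm, mul_comm]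

theorem iterate_eq_zero_of_le_s18 {a : A} {m n : ℕ} (ha : δ^[m] a = 0) (hmn : m ≤ n) :
    δ^[n] a = 0 := by
  rw [← Nat.sub_add_cancel hmn, Function.iterate_add_apply, ha, iterate_map_zero]

end Derivation

namespace IsLND

section CommRing

variable {k A : Type*} [CommRing k] [CommRing A] [Algebra k A] {δ : Derivation k A A}

theorem exists_iterate_eq_zero (h : IsLND δ) (a : A) : ∃ n, δ^[n] a = 0 := by
  simpa only [Module.End.pow_apply, Derivation.coeFn_coe] using h a

theorem exists_iterate_ne_zero_iterate_succ_eq_zero (h : IsLND δ) {a : A} (ha : a ≠ 0) :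
    ∃ n, δ^[n] a ≠ 0 ∧ δ^[n + 1] a = 0 := by
  classical
  have hex := h.exists_iterate_eq_zero a
  obtain ⟨n, hn⟩ : ∃ n, Nat.find hex = n + 1 := Nat.exists_eq_add_one.2 <|
    Nat.pos_of_ne_zero fun h0 ↦ ha (by simpa [h0] using Nat.find_spec hex)
  exact ⟨n, Nat.find_min hex (by omega), hn ▸ Nat.find_spec hex⟩

theorem map_eq_zero_of_map_mul_eq_zero [IsDomain A] [CharZero A] (h : IsLND δ) {a b : A}
    (hab : a * b ≠ 0) (hδ : δ (a * b) = 0) : δ a = 0 := by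
  obtain ⟨p, hpa, hpa'⟩ :=
    h.exists_iterate_ne_zero_iterate_succ_eq_zero (left_ne_zero_of_mul hab)
  obtain ⟨q, hqb, hqb'⟩ :=
    h.exists_iterate_ne_zero_iterate_succ_eq_zero (right_ne_zero_of_mul hab)
  have hleading : δ^[p + q] (a * b) = (p + q).choose p • (δ^[p] a * δ^[q] b) := by
    rw [δ.iterate_map_mul]
    refine Finset.sum_eq_single_of_mem (p, q) (Finset.HasAntidiagonal.mem_antidiagonal.2 rfl)
      fun ⟨i, j⟩ hij hne ↦ ?_
    rw [Finset.HasAntidiagonal.mem_antidiagonal] at hij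
    have hip : i ≠ p := fun hi ↦ hne (by simp only [Prod.mk.injEq]; omega)
    rcases lt_or_gt_of_ne hip with hi | hi
    · rw [δ.iterate_eq_zero_of_le_s18 hqb' (by omega), mul_zero, smul_zero]
    · rw [δ.iterate_eq_zero_of_le_s18 hpa' hi, zero_mul, smul_zero]
  have hne : δ^[p + q] (a * b) ≠ 0 := by
    rw [hleading, nsmul_eq_mul]
    exact mul_ne_zero (Nat.cast_ne_zero.2 (Nat.choose_pos (by omega)).ne') (mul_ne_zero hpa hqb)
  obtain rfl : p = 0 := by
    by_contra hp
    exact hne (δ.iterate_eq_zero_of_le_s18 (m := 1) hδ (by omega))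
  exact hpa'

end CommRing

theorem map_eq_zero_of_sq_add_sq_add_pow_eq_zero {k A : Type*} [Field k] [CommRing A]
    [IsDomain A] [CharZero A] [Algebra k A] {δ : Derivation k A A} (h : IsLND δ) {i : k}
    (hi : i ^ 2 = -1) {γ : ℕ} {x y z : A} (hrel : x ^ 2 + y ^ 2 + z ^ γ = 0) (hz : z ≠ 0)
    (hδz : δ z = 0) : δ x = 0 ∧ δ y = 0 := by
  set j := algebraMap k A i
  have hj : j ^ 2 = -1 := by rw [← map_pow, hi, map_neg, map_one]
  have huv : (x + j * y) * (x - j * y) = -z ^ γ := by linear_combination hrel - y ^ 2 * hj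
  have huv0 : (x + j * y) * (x - j * y) ≠ 0 := by
    rw [huv]
    exact neg_ne_zero.2 (pow_ne_zero γ hz)
  have hδuv : δ ((x + j * y) * (x - j * y)) = 0 := by
    rw [huv, map_neg, δ.leibniz_pow, hδz, smul_zero, smul_zero, neg_zero]
  have hδj : ∀ w : A, δ (j * w) = j * δ w := fun w ↦ by
    rw [δ.leibniz, δ.map_algebraMap, smul_zero, add_zero, smul_eq_mul]
  have hu := h.map_eq_zero_of_map_mul_eq_zero huv0 hδuv
  have hv := h.map_eq_zero_of_map_mul_eq_zero (b := x + j * y) (by rwa [mul_comm])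
    (by rwa [mul_comm])
  rw [map_add, hδj] at hu
  rw [map_sub, hδj] at hv
  have hj0 : j ≠ 0 := fun h0 ↦ by simp [h0] at hj
  refine ⟨(mul_eq_zero.1 (?_ : 2 * δ x = 0)).resolve_left two_ne_zero,
    (mul_eq_zero.1 (?_ : (2 * j) * δ y = 0)).resolve_left (mul_ne_zero two_ne_zero hj0)⟩
  · linear_combination hu + hv
  · linear_combination hu - hv

end IsLND

theorem Polynomial.irreducible_X_pow_add_C_mul {A : Type*} [CommRing A] [IsDomain A] {p q : A}
    (hp : Prime p) (hpq : ¬ p ∣ q) {n : ℕ} (hn : n ≠ 0) :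
    Irreducible (X ^ n + C (p * q)) := by
  have hmonic : (X ^ n + C (p * q)).Monic := monic_X_pow_add_C _ hn
  have hdeg : (X ^ n + C (p * q)).natDegree = n := natDegree_X_pow_add_C
  refine IsEisensteinAt.irreducible ⟨?_, fun {m} hm ↦ ?_, ?_⟩
    ((Ideal.span_singleton_prime hp.ne_zero).2 hp) hmonic.isPrimitive (by omega)
  · rw [hmonic.leadingCoeff, Ideal.mem_span_singleton]
    exact fun h ↦ hp.not_isUnit (isUnit_of_dvd_one h)
  · rw [hdeg] at hm
    rw [coeff_add, coeff_X_pow, if_neg hm.ne, zero_add, coeff_C, Ideal.mem_span_singleton]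
    split_ifs
    · exact dvd_mul_right p q
    · exact dvd_zero p
  · rw [coeff_add, coeff_X_pow, if_neg (Ne.symm hn), zero_add, coeff_C_zero,
      Ideal.span_singleton_pow, Ideal.mem_span_singleton, sq]
    exact fun h ↦ hpq ((mul_dvd_mul_iff_left hp.ne_zero).1 h)

namespace MvPolynomial

variable {k : Type*} [Field k]

theorem prime_X_zero_add_C_mul_X_one (i : k) :
    Prime (X 0 + C i * X 1 : MvPolynomial (Fin 2) k) := by
  rw [← MulEquiv.prime_iff (finSuccEquiv k 1)]
  have : finSuccEquiv k 1 (X 0 + C i * X 1) = Polynomial.X - Polynomial.C (-(C i * X 0)) := by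
    rw [map_add, map_mul, finSuccEquiv_X_zero, show (1 : Fin 2) = Fin.succ 0 from rfl,
      finSuccEquiv_X_succ, ← algebraMap_eq, AlgEquiv.commutes]
    simp
  rw [this]
  exact Polynomial.prime_X_sub_C _

theorem prime_X_sq_add_X_sq_add_X_pow [NeZero (2 : k)] {i : k} (hi : i ^ 2 = -1) {γ : ℕ}
    (hγ : γ ≠ 0) : Prime (X 0 ^ 2 + X 1 ^ 2 + X 2 ^ γ : MvPolynomial (Fin 3) k) := by
  set p : MvPolynomial (Fin 2) k := X 0 + C i * X 1
  set q : MvPolynomial (Fin 2) k := X 0 - C i * X 1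
  have hpq : ¬ p ∣ q := fun h ↦ by
    have h2i : -i - i = 0 := by simpa [p, q] using map_dvd (aeval ![-i, 1]) h
    have hi0 : i ≠ 0 := by rintro rfl; norm_num at hi
    exact mul_ne_zero two_ne_zero hi0 (by linear_combination -h2i)
  have hmul : p * q = X 0 ^ 2 + X 1 ^ 2 := by
    have hCi : C i ^ 2 = (-1 : MvPolynomial (Fin 2) k) := by rw [← map_pow, hi, map_neg, map_one]
    linear_combination (-(X 1 : MvPolynomial (Fin 2) k) ^ 2) * hCi
  -- make `z` the polynomial variable, over `k[x, y]`
  let e := (renameEquiv k (Equiv.swap (0 : Fin 3) 2)).trans (finSuccEquiv k 2)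
  have he : e (X 0 ^ 2 + X 1 ^ 2 + X 2 ^ γ) = Polynomial.X ^ γ + Polynomial.C (p * q) := by
    have hswap : renameEquiv k (Equiv.swap (0 : Fin 3) 2) (X 0 ^ 2 + X 1 ^ 2 + X 2 ^ γ) =
        X (Fin.succ 1) ^ 2 + X (Fin.succ 0) ^ 2 + X 0 ^ γ := by
      simp only [renameEquiv_apply, map_add, map_pow, rename_X]
      rfl
    rw [AlgEquiv.trans_apply, hswap, map_add, map_add, map_pow, map_pow, map_pow,
      finSuccEquiv_X_zero, finSuccEquiv_X_succ, finSuccEquiv_X_succ, hmul, map_add, map_pow,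
      map_pow]
    ring
  rw [← UniqueFactorizationMonoid.irreducible_iff_prime, ← MulEquiv.irreducible_iff e, he]
  exact Polynomial.irreducible_X_pow_add_C_mul (prime_X_zero_add_C_mul_X_one i) hpq hγ

theorem quotient_derivation_eq_zero_of_map_mk_X {σ R : Type*} [CommRing R]
    {I : Ideal (MvPolynomial σ R)}
    (δ : Derivation R (MvPolynomial σ R ⧸ I) (MvPolynomial σ R ⧸ I))
    (h : ∀ i, δ (Ideal.Quotient.mk I (X i)) = 0) : δ = 0 := by
  have hcomp : δ.compAlgebraMap (MvPolynomial σ R) = 0 := derivation_ext h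
  ext r
  obtain ⟨p, rfl⟩ := Ideal.Quotient.mk_surjective r
  exact congr($hcomp p)

end MvPolynomial

theorem stmt18_general {k : Type*} [Field k] [IsAlgClosed k] [CharZero k]
    (γ : ℕ) (hγ : 3 ≤ γ)
    (I : Ideal (MvPolynomial (Fin 3) k))
    (hI : I = Ideal.span {X 0 ^ 2 + X 1 ^ 2 + X 2 ^ γ}) :
    ¬ ∃ (δ : Derivation k (MvPolynomial (Fin 3) k ⧸ I) (MvPolynomial (Fin 3) k ⧸ I))
        (d : ℤ),
      δ ≠ 0 ∧ IsLND δ ∧ δ (Ideal.Quotient.mk I (X 2)) = 0 ∧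
      (∀ (n : ℕ) (p : MvPolynomial (Fin 3) k), p.IsWeightedHomogeneous ![γ, γ, 2] n →
        δ (Ideal.Quotient.mk I p) = 0 ∨
        ∃ q : MvPolynomial (Fin 3) k, (∃ m : ℕ, (m : ℤ) = (n : ℤ) + d ∧
            q.IsWeightedHomogeneous ![γ, γ, 2] m) ∧
          δ (Ideal.Quotient.mk I p) = Ideal.Quotient.mk I q) := by
  rintro ⟨δ, -, hδ, hlnd, hδz, -⟩
  obtain ⟨i, hi⟩ := IsAlgClosed.exists_pow_nat_eq (-1 : k) two_pos
  have hγ0 : γ ≠ 0 := by omega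
  have hprime : Prime (X 0 ^ 2 + X 1 ^ 2 + X 2 ^ γ : MvPolynomial (Fin 3) k) :=
    prime_X_sq_add_X_sq_add_X_pow hi hγ0
  have : I.IsPrime := hI ▸ (Ideal.span_singleton_prime hprime.ne_zero).2 hprime
  have : CharZero (MvPolynomial (Fin 3) k ⧸ I) :=
    charZero_of_injective_algebraMap (algebraMap k _).injective
  have hrel : Ideal.Quotient.mk I (X 0) ^ 2 + Ideal.Quotient.mk I (X 1) ^ 2 +
      Ideal.Quotient.mk I (X 2) ^ γ = 0 := by
    rw [← map_pow, ← map_pow, ← map_pow, ← map_add, ← map_add, Ideal.Quotient.eq_zero_iff_mem,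
      hI]
    exact Ideal.subset_span rfl
  have hz : Ideal.Quotient.mk I (X 2) ≠ 0 := fun h ↦ by
    rw [Ideal.Quotient.eq_zero_iff_mem, hI, Ideal.mem_span_singleton] at h
    simpa [hi, hγ0] using map_dvd (aeval ![i, 0, 1]) h
  obtain ⟨hδx, hδy⟩ := hlnd.map_eq_zero_of_sq_add_sq_add_pow_eq_zero hi hrel hz hδz
  exact hδ (quotient_derivation_eq_zero_of_map_mk_X δ fun j ↦ by fin_cases j <;> assumption)

/-- On `R = k[x,y,z]/(x² + y² + z^γ)` with `γ ≥ 3` odd, there is no nonzero locally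
nilpotent derivation of `R` which is homogeneous of some degree with respect to the
grading `deg x = deg y = γ`, `deg z = 2` and which kills `z`: homogeneity means that
the image of every weighted-homogeneous polynomial of degree `n` is zero or the class
of a weighted-homogeneous polynomial of degree `n + d`. -/
theorem stmt18 {k : Type*} [Field k] [IsAlgClosed k] [CharZero k]
    (γ : ℕ) (hγ : 3 ≤ γ) (hodd : Odd γ)
    (I : Ideal (MvPolynomial (Fin 3) k))
    (hI : I = Ideal.span {X 0 ^ 2 + X 1 ^ 2 + X 2 ^ γ}) :
    ¬ ∃ (δ : Derivation k (MvPolynomial (Fin 3) k ⧸ I) (MvPolynomial (Fin 3) k ⧸ I))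
        (d : ℤ),
      δ ≠ 0 ∧ IsLND δ ∧ δ (Ideal.Quotient.mk I (X 2)) = 0 ∧
      (∀ (n : ℕ) (p : MvPolynomial (Fin 3) k), p.IsWeightedHomogeneous ![γ, γ, 2] n →
        δ (Ideal.Quotient.mk I p) = 0 ∨
        ∃ q : MvPolynomial (Fin 3) k, (∃ m : ℕ, (m : ℤ) = (n : ℤ) + d ∧
            q.IsWeightedHomogeneous ![γ, γ, 2] m) ∧
          δ (Ideal.Quotient.mk I p) = Ideal.Quotient.mk I q) :=
  stmt18_general γ hγ I hI
end
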